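/- arXiv:1905.09189 — 3 statements merged into one kernel-verified Lean document; each statement's English description precedes it below -/
import Mathlib

section
/- Let k ≥ 2, n ≥ 2, 1 ≤ p < ∞, and let Q be a positive definite integral form of degree k in n variables satisfying r(λ) ≤ C_1 λ^{n/k−1} for all integers λ ≥ 1. Let c > 0. There is a constant c' > 0, depending only on n, k, p, c and C_1 (not on q or Λ), with the following property: if q ≥ 1 is an integer and Λ is a finite set of positive integers with r(λ) > 0 for every λ ∈ Λ, such that for every b ∈ (ℤ/qℤ)^n there exists λ(b) ∈ Λ with #{x ∈ ℤ^n : Q(x) = λ(b) and x ≡ b (mod q)} ≥ c q^{−(n−1)} λ(b)^{n/k−1}, then for all sufficiently large integers T (depending on q and Λ) the indicator function f = 1_{(qℤ)^n ∩ [−T,T]^n} satisfies ‖ max_{λ ∈ Λ} A_λ f ‖_{ℓ^p(ℤ^n)} ≥ c' q^{n/p − (n−1)} ‖f‖_{ℓ^p(ℤ^n)}. In particular the ℓ^p(ℤ^n) operator norm of f ↦ max_{λ∈Λ} |A_λ f| is at least c' q^{n/p − (n−1)}. -/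
open scoped ENNReal NNReal BigOperators

noncomputable section

/-- The discrete average over the level set `{x : Q x = lam}`. -/
def sphAvg (n : ℕ) (Q : (Fin n → ℤ) → ℤ) (lam : ℤ) (f : (Fin n → ℤ) → ℂ)
    (y : Fin n → ℤ) : ℂ :=
  (Nat.card {x : Fin n → ℤ // Q x = lam} : ℂ)⁻¹ *
    ∑' x : {x : Fin n → ℤ // Q x = lam}, f (y - x.val)

/-- The `ℓ^p(ℤ^n)` norm, valued in `ℝ≥0∞`. -/
def lpNormZ (n : ℕ) (p : ℝ) (f : (Fin n → ℤ) → ℂ) : ℝ≥0∞ :=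
  (∑' y : Fin n → ℤ, (‖f y‖₊ : ℝ≥0∞) ^ p) ^ (1 / p)

/-- The indicator function of `(qℤ)^n ∩ [-T,T]^n`. -/
def boxInd (n : ℕ) (q : ℕ) (T : ℕ) : (Fin n → ℤ) → ℂ := fun y =>
  if (∀ i, (q : ℤ) ∣ y i) ∧ (∀ i, |y i| ≤ (T : ℤ)) then 1 else 0

/-! The lower bound is pointwise. All solutions of `Q x = λ`, `λ ∈ Λ`, lie in a box of radius `R`,
so for `y` at distance `R` inside `[-T, T]^n` every solution `x ≡ y (mod q)` puts `y - x` in the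
support of `f`. Taking `λ = λ(y mod q)` gives
`A_λ f(y) ≥ c q^{-(n-1)} λ^{n/k-1} / r(λ) ≥ (c / C₁) q^{-(n-1)}`
on roughly `T^n` points, while `‖f‖_p^p` counts only about `(T/q)^n` points. -/

open Finset

lemma ENNReal.pow_rpow_one_div (x : ℝ≥0∞) (n : ℕ) (p : ℝ) :
    (x ^ n) ^ (1 / p) = x ^ ((n : ℝ) / p) := by
  rw [← ENNReal.rpow_natCast, ← ENNReal.rpow_mul, mul_one_div]

lemma tsum_rpow_le_card {α : Type*} {p : ℝ} (hp : 0 < p) (s : Finset α) {g : α → ℝ≥0∞}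
    (hg : ∀ y, g y ≤ 1) (hs : ∀ y ∉ s, g y = 0) : ∑' y, g y ^ p ≤ #s := by
  rw [tsum_eq_sum fun y hy => by rw [hs y hy, ENNReal.zero_rpow_of_pos hp]]
  calc ∑ y ∈ s, g y ^ p ≤ ∑ _y ∈ s, 1 := sum_le_sum fun y _ => ENNReal.rpow_le_one (hg y) hp.le
    _ = #s := by simp

lemma card_rpow_mul_le_tsum_rpow_rpow {α : Type*} {p : ℝ} (hp : 0 < p) (s : Finset α)
    {g : α → ℝ≥0∞} {a : ℝ≥0∞} (h : ∀ y ∈ s, a ≤ g y) :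
    (#s : ℝ≥0∞) ^ (1 / p) * a ≤ (∑' y, g y ^ p) ^ (1 / p) := by
  have hsum : (#s : ℝ≥0∞) * a ^ p ≤ ∑' y, g y ^ p := calc
    (#s : ℝ≥0∞) * a ^ p = ∑ _y ∈ s, a ^ p := by rw [sum_const, nsmul_eq_mul]
    _ ≤ ∑ y ∈ s, g y ^ p := sum_le_sum fun y hy => ENNReal.rpow_le_rpow (h y hy) hp.le
    _ ≤ ∑' y, g y ^ p := ENNReal.sum_le_tsum s
  calc (#s : ℝ≥0∞) ^ (1 / p) * a = ((#s : ℝ≥0∞) * a ^ p) ^ (1 / p) := by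
        rw [ENNReal.mul_rpow_of_nonneg _ _ (by positivity), ← ENNReal.rpow_mul,
          mul_one_div_cancel hp.ne', ENNReal.rpow_one]
    _ ≤ _ := ENNReal.rpow_le_rpow hsum (by positivity)

lemma exists_natAbs_le_of_finite {n : ℕ} {S : Set (Fin n → ℤ)} (hS : S.Finite) :
    ∃ R : ℕ, ∀ x ∈ S, ∀ i, (x i).natAbs ≤ R := by
  obtain ⟨R, hR⟩ := (hS.image fun x => univ.sup fun i => (x i).natAbs).bddAbove
  exact ⟨R, fun x hx i =>
    (le_sup (f := fun i => (x i).natAbs) (mem_univ i)).trans (hR ⟨x, hx, rfl⟩)⟩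

lemma card_piFinset_Icc_neg (n A : ℕ) :
    #(Fintype.piFinset fun _ : Fin n => Icc (-(A : ℤ)) A) = (2 * A + 1) ^ n := by
  rw [Fintype.card_piFinset_const, Int.card_Icc]
  congr 1
  omega

lemma mem_piFinset_of_boxInd_ne_zero {n q T : ℕ} (hq : 0 < q) {y : Fin n → ℤ}
    (hy : boxInd n q T y ≠ 0) :
    y ∈ Fintype.piFinset fun _ => (Icc (-(T / q : ℕ) : ℤ) (T / q)).image ((q : ℤ) * ·) := by
  obtain ⟨hdvd, habs⟩ : (∀ i, (q : ℤ) ∣ y i) ∧ ∀ i, |y i| ≤ T := by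
    by_contra h
    exact hy (if_neg h)
  refine Fintype.mem_piFinset.2 fun i => ?_
  obtain ⟨m, hm⟩ := hdvd i
  have hm_le : m.natAbs ≤ T / q := by
    rw [Nat.le_div_iff_mul_le hq, mul_comm, ← Int.natAbs_natCast q, ← Int.natAbs_mul, ← hm]
    have := habs i
    rw [abs_le] at this
    omega
  exact mem_image.2 ⟨m, mem_Icc.2 (by omega), hm.symm⟩

lemma lpNormZ_boxInd_le {n q T : ℕ} (hq : 0 < q) {p : ℝ} (hp : 0 < p) :
    lpNormZ n p (boxInd n q T) ≤ ((2 * (T / q) + 1 : ℕ) : ℝ≥0∞) ^ ((n : ℝ) / p) := by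
  set s := Fintype.piFinset fun _ : Fin n => (Icc (-(T / q : ℕ) : ℤ) (T / q)).image ((q : ℤ) * ·)
  have hcard : #s ≤ (2 * (T / q) + 1) ^ n := by
    rw [Fintype.card_piFinset_const]
    refine Nat.pow_le_pow_left (card_image_le.trans ?_) n
    rw [Int.card_Icc]
    omega
  have hle_one : ∀ y, (‖boxInd n q T y‖₊ : ℝ≥0∞) ≤ 1 := fun y => by
    unfold boxInd; split_ifs <;> simp
  rw [lpNormZ, ← ENNReal.pow_rpow_one_div]
  refine ENNReal.rpow_le_rpow ?_ (by positivity)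
  calc ∑' y, (‖boxInd n q T y‖₊ : ℝ≥0∞) ^ p ≤ #s :=
        tsum_rpow_le_card hp s hle_one fun y hy => by
          rw [not_imp_comm.1 (mem_piFinset_of_boxInd_ne_zero hq) hy]; simp
    _ ≤ _ := by exact_mod_cast hcard

lemma card_congr_div_card_le_norm_sphAvg {n : ℕ} (Q : (Fin n → ℤ) → ℤ) {q T R : ℕ} {lam : ℤ}
    [Finite {x // Q x = lam}] (hR : ∀ x, Q x = lam → ∀ i, (x i).natAbs ≤ R)
    {y : Fin n → ℤ} (hy : ∀ i, (y i).natAbs + R ≤ T) :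
    (Nat.card {x // Q x = lam ∧ ∀ i, (x i : ZMod q) = y i} : ℝ) / Nat.card {x // Q x = lam} ≤
      ‖sphAvg n Q lam (boxInd n q T) y‖ := by
  have := Fintype.ofFinite {x // Q x = lam}
  classical
  set P : {x // Q x = lam} → Prop :=
    fun x => (∀ i, (q : ℤ) ∣ (y - x.1) i) ∧ ∀ i, |(y - x.1) i| ≤ T
  have hsph : sphAvg n Q lam (boxInd n q T) y = (Nat.card {x // Q x = lam} : ℂ)⁻¹ * #{x | P x} := by
    rw [sphAvg, tsum_fintype, ← sum_boole]
    rfl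
  have hcongr : Nat.card {x // Q x = lam ∧ ∀ i, (x i : ZMod q) = y i} ≤ #{x | P x} := by
    rw [← Fintype.card_subtype, ← Nat.card_eq_fintype_card]
    refine Nat.card_le_card_of_injective (fun x => ⟨⟨x.1, x.2.1⟩, fun i => ?_, fun i => ?_⟩)
      fun x x' h => Subtype.ext (congrArg (fun z => z.1.1) h)
    · exact (ZMod.intCast_eq_intCast_iff_dvd_sub _ _ q).1 (x.2.2 i)
    · have := hR x.1 x.2.1 i
      have := hy i
      simp only [Pi.sub_apply, abs_le]
      omega
  rw [hsph, norm_mul, norm_inv, Complex.norm_natCast, Complex.norm_natCast, inv_mul_eq_div]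
  gcongr

lemma ofReal_div_le_iSup_norm_sphAvg {n : ℕ} (Q : (Fin n → ℤ) → ℤ) {q T R : ℕ} {Λ : Finset ℕ}
    {a C s : ℝ} (hC : 0 < C)
    (hpos : ∀ lam ∈ Λ, 0 < Nat.card {x // Q x = lam})
    (hcount : ∀ lam ∈ Λ, (Nat.card {x // Q x = lam} : ℝ) ≤ C * (lam : ℝ) ^ s)
    (hR : ∀ lam ∈ Λ, ∀ x, Q x = lam → ∀ i, (x i).natAbs ≤ R)
    {y : Fin n → ℤ} (hy : ∀ i, (y i).natAbs + R ≤ T)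
    (hcover : ∃ lam ∈ Λ, a * (lam : ℝ) ^ s ≤
      Nat.card {x // Q x = lam ∧ ∀ i, (x i : ZMod q) = y i}) :
    ENNReal.ofReal (a / C) ≤ ⨆ lam ∈ Λ, (‖sphAvg n Q lam (boxInd n q T) y‖₊ : ℝ≥0∞) := by
  obtain ⟨lam, hlam, hm⟩ := hcover
  have hr := hpos lam hlam
  have := (Nat.card_pos_iff.1 hr).2
  have hr' : (0 : ℝ) < Nat.card {x // Q x = lam} := by exact_mod_cast hr
  have hL : 0 < (lam : ℝ) ^ s := pos_of_mul_pos_right (hr'.trans_le (hcount lam hlam)) hC.le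
  refine le_trans ?_ (le_biSup _ hlam)
  rw [← ENNReal.ofReal_coe_nnreal, coe_nnnorm]
  refine ENNReal.ofReal_le_ofReal (le_trans ?_ (card_congr_div_card_le_norm_sphAvg Q (hR lam hlam) hy))
  calc a / C = a * (lam : ℝ) ^ s / (C * (lam : ℝ) ^ s) := (mul_div_mul_right _ _ hL.ne').symm
    _ ≤ _ := div_le_div₀ (Nat.cast_nonneg _) hm hr' (hcount lam hlam)

lemma ofReal_div_mul_rpow_le {d t p κ : ℝ} (hd : 0 ≤ d) (hp : 1 ≤ p) (hκ : 0 ≤ κ)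
    {q X Y : ℕ} (hq : 0 < q) (hXY : q * X ≤ 3 * Y) :
    ENNReal.ofReal (κ / 3 ^ d) * (q : ℝ≥0∞) ^ (d / p - t) * (X : ℝ≥0∞) ^ (d / p) ≤
      (Y : ℝ≥0∞) ^ (d / p) * ENNReal.ofReal (κ * (q : ℝ) ^ (-t)) := by
  have hq0 : (q : ℝ≥0∞) ≠ 0 := by exact_mod_cast hq.ne'
  have hdp : 0 ≤ d / p := div_nonneg hd (zero_le_one.trans hp)
  have h3 : ENNReal.ofReal (κ / 3 ^ d) * 3 ^ (d / p) ≤ ENNReal.ofReal κ := calc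
    ENNReal.ofReal (κ / 3 ^ d) * 3 ^ (d / p) ≤ ENNReal.ofReal (κ / 3 ^ d) * 3 ^ d := by
        gcongr
        · norm_num
        · exact div_le_self hd hp
    _ = ENNReal.ofReal κ := by
        rw [← ENNReal.ofReal_ofNat 3, ENNReal.ofReal_rpow_of_pos (by norm_num),
          ← ENNReal.ofReal_mul (by positivity), div_mul_cancel₀ _ (by positivity)]
  have hqX : (q : ℝ≥0∞) ^ (d / p) * (X : ℝ≥0∞) ^ (d / p) ≤ 3 ^ (d / p) * (Y : ℝ≥0∞) ^ (d / p) := by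
    rw [← ENNReal.mul_rpow_of_nonneg _ _ hdp, ← ENNReal.mul_rpow_of_nonneg _ _ hdp]
    exact ENNReal.rpow_le_rpow (by exact_mod_cast hXY) hdp
  rw [ENNReal.ofReal_mul hκ, ← ENNReal.ofReal_rpow_of_pos (by exact_mod_cast hq),
    ENNReal.ofReal_natCast, sub_eq_add_neg, ENNReal.rpow_add _ _ hq0 (ENNReal.natCast_ne_top q)]
  calc ENNReal.ofReal (κ / 3 ^ d) * ((q : ℝ≥0∞) ^ (d / p) * (q : ℝ≥0∞) ^ (-t)) * (X : ℝ≥0∞) ^ (d / p)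
      = ENNReal.ofReal (κ / 3 ^ d) * ((q : ℝ≥0∞) ^ (d / p) * (X : ℝ≥0∞) ^ (d / p)) *
          (q : ℝ≥0∞) ^ (-t) := by ring
    _ ≤ ENNReal.ofReal (κ / 3 ^ d) * (3 ^ (d / p) * (Y : ℝ≥0∞) ^ (d / p)) * (q : ℝ≥0∞) ^ (-t) := by
        gcongr
    _ ≤ ENNReal.ofReal κ * (Y : ℝ≥0∞) ^ (d / p) * (q : ℝ≥0∞) ^ (-t) := by
        rw [← mul_assoc]
        gcongr
    _ = _ := by ring
theorem stmt3_general (n k : ℕ) (p : ℝ) (hp : 1 ≤ p)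
    (c C₁ : ℝ) (hc : 0 < c) :
    ∃ c' : ℝ≥0, 0 < c' ∧
      ∀ Q : MvPolynomial (Fin n) ℤ, Q.IsHomogeneous k →
        (∀ x : Fin n → ℤ, x ≠ 0 → 0 < MvPolynomial.eval x Q) →
        (∀ lam : ℕ, 1 ≤ lam →
          (Nat.card {x : Fin n → ℤ // MvPolynomial.eval x Q = (lam : ℤ)} : ℝ) ≤
            C₁ * (lam : ℝ) ^ ((n : ℝ) / k - 1)) →
        ∀ q : ℕ, 1 ≤ q → ∀ Λ : Finset ℕ,
          (∀ lam ∈ Λ, 0 < lam ∧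
            0 < Nat.card {x : Fin n → ℤ // MvPolynomial.eval x Q = (lam : ℤ)}) →
          (∀ b : Fin n → ZMod q, ∃ lam ∈ Λ,
            c * (q : ℝ) ^ (-((n : ℝ) - 1)) * (lam : ℝ) ^ ((n : ℝ) / k - 1) ≤
              (Nat.card {x : Fin n → ℤ // MvPolynomial.eval x Q = (lam : ℤ) ∧
                ∀ i, ((x i : ZMod q) = b i)} : ℝ)) →
          ∃ T₀ : ℕ, ∀ T : ℕ, T₀ ≤ T →
            (c' : ℝ≥0∞) * (q : ℝ≥0∞) ^ ((n : ℝ) / p - ((n : ℝ) - 1)) *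
                lpNormZ n p (boxInd n q T) ≤
              (∑' y : Fin n → ℤ,
                (⨆ lam ∈ Λ,
                  (‖sphAvg n (fun x => MvPolynomial.eval x Q) (lam : ℤ)
                      (boxInd n q T) y‖₊ : ℝ≥0∞)) ^ p) ^ (1 / p) := by
  have hp0 : 0 < p := one_pos.trans_le hp
  have hC : 0 < max C₁ 1 := one_pos.trans_le (le_max_right _ _)
  refine ⟨(c / max C₁ 1 / 3 ^ (n : ℝ)).toNNReal, by simp only [Real.toNNReal_pos]; positivity, ?_⟩
  intro Q _ _ hcount q hq Λ hΛ hcover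
  -- `Nat.card` of an infinite type is `0`, so `r(λ) > 0` makes each level set finite.
  obtain ⟨R, hR⟩ := exists_natAbs_le_of_finite (S := ⋃ lam ∈ Λ, {x | MvPolynomial.eval x Q = lam})
    (Λ.finite_toSet.biUnion fun lam hlam =>
      Set.finite_coe_iff.1 (Nat.card_pos_iff.1 (hΛ lam hlam).2).2)
  refine ⟨q + 2 * R, fun T hT => ?_⟩
  set A := T - R
  have hpoint : ∀ y ∈ Fintype.piFinset fun _ : Fin n => Icc (-(A : ℤ)) A,
      ENNReal.ofReal (c * (q : ℝ) ^ (-((n : ℝ) - 1)) / max C₁ 1) ≤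
        ⨆ lam ∈ Λ, (‖sphAvg n (fun x => MvPolynomial.eval x Q) (lam : ℤ)
          (boxInd n q T) y‖₊ : ℝ≥0∞) := fun y hy =>
    ofReal_div_le_iSup_norm_sphAvg _ hC (fun lam hlam => (hΛ lam hlam).2)
      (fun lam hlam => (hcount lam (hΛ lam hlam).1).trans (by gcongr; exact le_max_left _ _))
      (fun lam hlam x hx => hR x (Set.mem_biUnion hlam hx))
      (fun i => by have := Fintype.mem_piFinset.1 hy i; rw [mem_Icc] at this; omega)
      (hcover fun i => y i)
  calc _ ≤ ((c / max C₁ 1 / 3 ^ (n : ℝ)).toNNReal : ℝ≥0∞) *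
        (q : ℝ≥0∞) ^ ((n : ℝ) / p - ((n : ℝ) - 1)) *
          ((2 * (T / q) + 1 : ℕ) : ℝ≥0∞) ^ ((n : ℝ) / p) := by
        gcongr; exact lpNormZ_boxInd_le hq hp0
    _ ≤ ((2 * A + 1 : ℕ) : ℝ≥0∞) ^ ((n : ℝ) / p) *
          ENNReal.ofReal (c * (q : ℝ) ^ (-((n : ℝ) - 1)) / max C₁ 1) := by
        rw [mul_div_right_comm]
        refine ofReal_div_mul_rpow_le (Nat.cast_nonneg n) hp (by positivity) hq ?_
        have := Nat.div_mul_le_self T q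
        have : q * (2 * (T / q) + 1) = 2 * (T / q * q) + q := by ring
        omega
    _ ≤ _ := by
        rw [← ENNReal.pow_rpow_one_div, ← Nat.cast_pow, ← card_piFinset_Icc_neg]
        exact card_rpow_mul_le_tsum_rpow_rpow hp0 _ hpoint

theorem stmt3 (n k : ℕ) (hk : 2 ≤ k) (hn : 2 ≤ n) (p : ℝ) (hp : 1 ≤ p)
    (c C₁ : ℝ) (hc : 0 < c) :
    ∃ c' : ℝ≥0, 0 < c' ∧
      ∀ Q : MvPolynomial (Fin n) ℤ, Q.IsHomogeneous k →
        (∀ x : Fin n → ℤ, x ≠ 0 → 0 < MvPolynomial.eval x Q) →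
        (∀ lam : ℕ, 1 ≤ lam →
          (Nat.card {x : Fin n → ℤ // MvPolynomial.eval x Q = (lam : ℤ)} : ℝ) ≤
            C₁ * (lam : ℝ) ^ ((n : ℝ) / k - 1)) →
        ∀ q : ℕ, 1 ≤ q → ∀ Λ : Finset ℕ,
          (∀ lam ∈ Λ, 0 < lam ∧
            0 < Nat.card {x : Fin n → ℤ // MvPolynomial.eval x Q = (lam : ℤ)}) →
          (∀ b : Fin n → ZMod q, ∃ lam ∈ Λ,
            c * (q : ℝ) ^ (-((n : ℝ) - 1)) * (lam : ℝ) ^ ((n : ℝ) / k - 1) ≤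
              (Nat.card {x : Fin n → ℤ // MvPolynomial.eval x Q = (lam : ℤ) ∧
                ∀ i, ((x i : ZMod q) = b i)} : ℝ)) →
          ∃ T₀ : ℕ, ∀ T : ℕ, T₀ ≤ T →
            (c' : ℝ≥0∞) * (q : ℝ≥0∞) ^ ((n : ℝ) / p - ((n : ℝ) - 1)) *
                lpNormZ n p (boxInd n q T) ≤
              (∑' y : Fin n → ℤ,
                (⨆ lam ∈ Λ,
                  (‖sphAvg n (fun x => MvPolynomial.eval x Q) (lam : ℤ)
                      (boxInd n q T) y‖₊ : ℝ≥0∞)) ^ p) ^ (1 / p) :=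
  stmt3_general n k p hp c C₁ hc
end
end

section
/- Let k ≥ 2, n ≥ k, and let Q be a positive definite integral form of degree k in n variables. Suppose there are constants 0 < c ≤ C such that for every integer q ≥ 1 and every b ∈ (ℤ/qℤ)^n there is R_0(q) such that c q^{−n} R^{n/k} ≤ #{x ∈ ℤ^n : x ≡ b (mod q) and R ≤ Q(x) < 2R} ≤ C q^{−n} R^{n/k} for all real R ≥ R_0(q). Then there is a constant c' > 0, depending only on c, n and k, such that for every integer q ≥ 1, every b ∈ (ℤ/qℤ)^n and every real R ≥ max(R_0(q), q) there exists an integer λ with R ≤ λ < 2R and #{x ∈ ℤ^n : Q(x) = λ and x ≡ b (mod q)} ≥ c' q^{1−n} λ^{n/k−1}. -/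
open scoped BigOperators

noncomputable section

/-- The number of lattice points in the congruence class `b mod q` lying in the
`Q`-annulus `R ≤ Q(x) < 2R`. -/
def annCount (n : ℕ) (Q : MvPolynomial (Fin n) ℤ) (q : ℕ) (b : Fin n → ZMod q)
    (R : ℝ) : ℕ :=
  Nat.card {x : Fin n → ℤ // (∀ i, ((x i : ZMod q) = b i)) ∧
    R ≤ ((MvPolynomial.eval x Q : ℤ) : ℝ) ∧ ((MvPolynomial.eval x Q : ℤ) : ℝ) < 2 * R}

/-- The number of solutions of `Q(x) = lam` in the congruence class `b mod q`. -/
def levelCount (n : ℕ) (Q : MvPolynomial (Fin n) ℤ) (q : ℕ) (b : Fin n → ZMod q)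
    (lam : ℤ) : ℕ :=
  Nat.card {x : Fin n → ℤ // MvPolynomial.eval x Q = lam ∧
    ∀ i, ((x i : ZMod q) = b i)}

lemma cong_eval (n : ℕ) (Q : MvPolynomial (Fin n) ℤ) (q : ℕ) (b : Fin n → ZMod q)
    (x : Fin n → ℤ) (hx : ∀ i, ((x i : ZMod q) = b i)) :
    ((MvPolynomial.eval x Q : ℤ) : ZMod q) =
      MvPolynomial.eval₂ (Int.castRingHom (ZMod q)) b Q := by
  have h := MvPolynomial.eval₂_comp_left (Int.castRingHom (ZMod q)) (RingHom.id ℤ) x Q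
  rw [MvPolynomial.eval₂_id] at h
  simp only [RingHom.comp_id] at h
  rw [show ((MvPolynomial.eval x Q : ℤ) : ZMod q)
      = (Int.castRingHom (ZMod q)) (MvPolynomial.eval x Q) from rfl, h]
  congr 1
  funext i
  simpa using hx i

theorem stmt4 (n k : ℕ) (hk : 2 ≤ k) (hnk : k ≤ n) (c : ℝ) (hc : 0 < c) :
    ∃ c' : ℝ, 0 < c' ∧
      ∀ C : ℝ, c ≤ C →
      ∀ Q : MvPolynomial (Fin n) ℤ, Q.IsHomogeneous k →
        (∀ x : Fin n → ℤ, x ≠ 0 → 0 < MvPolynomial.eval x Q) →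
      ∀ R₀ : ℕ → ℝ,
        (∀ q : ℕ, 1 ≤ q → ∀ b : Fin n → ZMod q, ∀ R : ℝ, R₀ q ≤ R →
          c * (q : ℝ) ^ (-(n : ℝ)) * R ^ ((n : ℝ) / k) ≤ (annCount n Q q b R : ℝ) ∧
          (annCount n Q q b R : ℝ) ≤ C * (q : ℝ) ^ (-(n : ℝ)) * R ^ ((n : ℝ) / k)) →
      ∀ q : ℕ, 1 ≤ q → ∀ b : Fin n → ZMod q, ∀ R : ℝ,
        max (R₀ q) (q : ℝ) ≤ R →
        ∃ lam : ℤ, R ≤ (lam : ℝ) ∧ (lam : ℝ) < 2 * R ∧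
          c' * (q : ℝ) ^ (1 - (n : ℝ)) * (lam : ℝ) ^ ((n : ℝ) / k - 1) ≤
            (levelCount n Q q b lam : ℝ) := by
  refine ⟨c / (5 * 2 ^ n), by positivity, ?_⟩
  intro C hC Q hQhom hQpos R₀ hyp q hq b R hR
  have hk0 : (0:ℝ) < (k:ℝ) := by exact_mod_cast Nat.lt_of_lt_of_le two_pos hk
  have hq1 : (1:ℝ) ≤ (q:ℝ) := by exact_mod_cast hq
  have hq0 : (0:ℝ) < (q:ℝ) := by linarith
  have hqz : (q:ℤ) ≠ 0 := by exact_mod_cast (by omega : q ≠ 0)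
  have hRq : (q:ℝ) ≤ R := le_trans (le_max_right _ _) hR
  have hR0 : (0:ℝ) < R := lt_of_lt_of_le hq0 hRq
  have hR1 : (1:ℝ) ≤ R := hq1.trans hRq
  have hek : (1:ℝ) ≤ (n:ℝ)/(k:ℝ) := by
    rw [le_div_iff₀ hk0, one_mul]; exact_mod_cast hnk
  obtain ⟨hlow, -⟩ := hyp q hq b R (le_trans (le_max_left _ _) hR)
  set A : Set (Fin n → ℤ) := {x | (∀ i, ((x i : ZMod q) = b i)) ∧
    R ≤ ((MvPolynomial.eval x Q : ℤ) : ℝ) ∧ ((MvPolynomial.eval x Q : ℤ) : ℝ) < 2 * R}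
    with hA
  have hannA : annCount n Q q b R = Nat.card A := rfl
  have hpos : (0:ℝ) < (annCount n Q q b R : ℝ) := lt_of_lt_of_le (by positivity) hlow
  have hposn : 0 < annCount n Q q b R := by exact_mod_cast hpos
  have hfinA : A.Finite := by
    rw [hannA] at hposn
    exact Set.finite_coe_iff.mp (Nat.card_pos_iff.mp hposn).2
  set s : Finset (Fin n → ℤ) := hfinA.toFinset with hs
  have hscard : s.card = annCount n Q q b R := by
    rw [hannA, Nat.card_coe_set_eq, Set.ncard_eq_toFinset_card _ hfinA]
  have hsne : s.Nonempty := by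
    rw [← Finset.card_pos, hscard]; omega
  set f : (Fin n → ℤ) → ℤ := fun x => MvPolynomial.eval x Q with hf
  set t : Finset ℤ := s.image f with ht
  have htne : t.Nonempty := hsne.image f
  have hmemA : ∀ x ∈ s, (∀ i, ((x i : ZMod q) = b i)) ∧
      R ≤ ((f x : ℤ):ℝ) ∧ ((f x : ℤ):ℝ) < 2*R := by
    intro x hx
    exact hfinA.mem_toFinset.mp hx
  -- all values in t are in [R, 2R) and congruent mod q
  have hval : ∀ y ∈ t, R ≤ (y:ℝ) ∧ (y:ℝ) < 2*R ∧
      ((y : ℤ) : ZMod q) = MvPolynomial.eval₂ (Int.castRingHom (ZMod q)) b Q := by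
    intro y hy
    obtain ⟨x, hxs, hxy⟩ := Finset.mem_image.mp hy
    obtain ⟨hxb, h1, h2⟩ := hmemA x hxs
    exact ⟨hxy ▸ h1, hxy ▸ h2, hxy ▸ cong_eval n Q q b x hxb⟩
  -- pigeonhole
  obtain ⟨lam, hlamt, hmax⟩ :=
    t.exists_max_image (fun y => (s.filter (fun x => f x = y)).card) htne
  have hsum : s.card = ∑ y ∈ t, (s.filter (fun x => f x = y)).card :=
    Finset.card_eq_sum_card_fiberwise (fun x hx => Finset.mem_image_of_mem f hx)
  have hpig : s.card ≤ t.card * (s.filter (fun x => f x = lam)).card := by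
    rw [hsum]
    calc ∑ y ∈ t, (s.filter (fun x => f x = y)).card
        ≤ t.card • (s.filter (fun x => f x = lam)).card :=
          Finset.sum_le_card_nsmul t _ _ (fun y hy => hmax y hy)
      _ = t.card * (s.filter (fun x => f x = lam)).card := by rw [smul_eq_mul]
  obtain ⟨hlamlo, hlamhi, -⟩ := hval lam hlamt
  refine ⟨lam, hlamlo, hlamhi, ?_⟩
  -- levelCount equals the fiber cardinality
  have hlevel : (levelCount n Q q b lam : ℕ) = (s.filter (fun x => f x = lam)).card := by
    have hset : {x : Fin n → ℤ | MvPolynomial.eval x Q = lam ∧ ∀ i, ((x i : ZMod q) = b i)}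
        = ↑(s.filter (fun x => f x = lam)) := by
      ext x
      simp only [Finset.coe_filter, Set.mem_setOf_eq, hs, Set.Finite.mem_toFinset, hA]
      constructor
      · rintro ⟨hxq, hxb⟩
        exact ⟨⟨hxb, by rw [hxq]; exact hlamlo, by rw [hxq]; exact hlamhi⟩, hxq⟩
      · rintro ⟨⟨hxb, -, -⟩, hxq⟩
        exact ⟨hxq, hxb⟩
    have h1 : levelCount n Q q b lam =
        Nat.card {x : Fin n → ℤ | MvPolynomial.eval x Q = lam ∧
          ∀ i, ((x i : ZMod q) = b i)} := rfl
    rw [h1, Nat.card_coe_set_eq, hset, Set.ncard_coe_finset]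
  -- bound t.card
  haveI : NeZero q := ⟨by omega⟩
  have hdvd : ∀ y ∈ t, (q:ℤ) ∣ y - lam := by
    intro y hy
    obtain ⟨-, -, h1⟩ := hval y hy
    obtain ⟨-, -, h2⟩ := hval lam hlamt
    have : ((y - lam : ℤ) : ZMod q) = 0 := by
      push_cast
      rw [h1, h2]; ring
    exact (ZMod.intCast_zmod_eq_zero_iff_dvd _ q).mp this
  set M : ℤ := ⌈R / (q:ℝ)⌉ with hM
  have hRq1 : (1:ℝ) ≤ R / q := by rw [le_div_iff₀ hq0, one_mul]; exact hRq
  have hM1 : 1 ≤ M := by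
    have := Int.le_ceil (R / (q:ℝ))
    exact_mod_cast Int.ceil_pos.mpr (by linarith)
  set g : ℤ → ℤ := fun y => (y - lam) / q with hg
  have hgspec : ∀ y ∈ t, (q:ℤ) * g y = y - lam := by
    intro y hy
    exact Int.mul_ediv_cancel' (hdvd y hy)
  have hbnd : ∀ y ∈ t, g y ∈ Finset.Icc (-M) M := by
    intro y hy
    obtain ⟨hylo, hyhi, -⟩ := hval y hy
    have hcast : (q:ℝ) * (g y : ℝ) = (y:ℝ) - (lam:ℝ) := by
      exact_mod_cast congrArg (Int.cast : ℤ → ℝ) (hgspec y hy)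
    have h1 : (q:ℝ) * (g y : ℝ) < R := by rw [hcast]; linarith
    have h2 : -R < (q:ℝ) * (g y : ℝ) := by rw [hcast]; linarith
    have hgylt : (g y : ℝ) < R / q := by
      rw [lt_div_iff₀ hq0]; linarith [h1]
    have hgygt : -(R / q) < (g y : ℝ) := by
      rw [← neg_div, div_lt_iff₀ hq0]
      have := mul_comm (q:ℝ) ((g y : ℤ) : ℝ)
      linarith [h2]
    rw [Finset.mem_Icc]
    constructor
    · have : -(M:ℝ) ≤ (g y : ℝ) := by
        have := Int.le_ceil (R / (q:ℝ))
        push_cast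
        linarith
      exact_mod_cast this
    · have : (g y : ℝ) ≤ (M:ℝ) := by
        have := Int.le_ceil (R / (q:ℝ))
        linarith
      exact_mod_cast this
  have hinj : Set.InjOn g ↑t := by
    intro y hy z hz hgyz
    have h1 := hgspec y (by exact_mod_cast hy)
    have h2 := hgspec z (by exact_mod_cast hz)
    have : y - lam = z - lam := by rw [← h1, ← h2, hgyz]
    omega
  have htcard : t.card ≤ (Finset.Icc (-M) M).card :=
    Finset.card_le_card_of_injOn g (fun y hy => hbnd y hy) hinj
  have hIcc : ((Finset.Icc (-M) M).card : ℝ) = 2*(M:ℝ) + 1 := by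
    have hIccZ : (((Finset.Icc (-M) M).card : ℤ)) = 2*M + 1 := by
      rw [Int.card_Icc, Int.toNat_of_nonneg (by linarith : (0:ℤ) ≤ M + 1 - -M)]; push_cast; ring
    have : ((((Finset.Icc (-M) M).card : ℤ)) : ℝ) = ((2*M + 1 : ℤ) : ℝ) := by
      exact_mod_cast hIccZ
    push_cast at this
    linarith [this]
  have htR : (t.card : ℝ) ≤ 5 * R / q := by
    have hMle : (M:ℝ) ≤ R/q + 1 := le_of_lt (Int.ceil_lt_add_one _)
    have h1 : (t.card:ℝ) ≤ 2*(M:ℝ) + 1 := by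
      rw [← hIcc]; exact_mod_cast htcard
    have : 2*(M:ℝ) + 1 ≤ 5 * (R/q) := by linarith
    calc (t.card:ℝ) ≤ 5 * (R/q) := by linarith
      _ = 5 * R / q := by ring
  -- final arithmetic
  set F : ℝ := ((s.filter (fun x => f x = lam)).card : ℝ) with hF
  have hF0 : 0 ≤ F := Nat.cast_nonneg _
  have hfib : c * (q:ℝ) ^ (-(n:ℝ)) * R ^ ((n:ℝ)/k) ≤ (5 * R / q) * F := by
    calc c * (q:ℝ) ^ (-(n:ℝ)) * R ^ ((n:ℝ)/k)
        ≤ (annCount n Q q b R : ℝ) := hlow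
      _ = (s.card : ℝ) := by rw [hscard]
      _ ≤ (t.card : ℝ) * F := by rw [hF]; exact_mod_cast hpig
      _ ≤ (5 * R / q) * F := mul_le_mul_of_nonneg_right htR hF0
  rw [hlevel, show ((Finset.filter (fun x => f x = lam) s).card : ℝ) = F from hF.symm]
  clear_value F
  clear hF
  have hlam0 : (0:ℝ) ≤ (lam:ℝ) := by linarith
  have he0 : (0:ℝ) ≤ (n:ℝ)/k - 1 := by linarith
  have hlam2 : (lam:ℝ) ^ ((n:ℝ)/k - 1) ≤ (2:ℝ)^n * R ^ ((n:ℝ)/k - 1) := by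
    have h1 : (lam:ℝ) ^ ((n:ℝ)/k - 1) ≤ (2*R) ^ ((n:ℝ)/k - 1) :=
      Real.rpow_le_rpow hlam0 (le_of_lt hlamhi) he0
    have h2 : (2*R : ℝ) ^ ((n:ℝ)/k - 1) = (2:ℝ)^((n:ℝ)/k - 1) * R ^ ((n:ℝ)/k - 1) :=
      Real.mul_rpow (by norm_num) (le_of_lt hR0)
    have h3 : (2:ℝ)^((n:ℝ)/k - 1) ≤ (2:ℝ)^((n:ℝ)) := by
      apply Real.rpow_le_rpow_of_exponent_le (by norm_num)
      have hkn : (n:ℝ)/k ≤ (n:ℝ) := by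
        rw [div_le_iff₀ hk0]
        have hnn : (0:ℝ) ≤ (n:ℝ) := Nat.cast_nonneg n
        have hk2 : (2:ℝ) ≤ (k:ℝ) := by exact_mod_cast hk
        have hk1 : (1:ℝ) ≤ (k:ℝ) := by linarith
        nlinarith [mul_le_mul_of_nonneg_left hk1 hnn]
      linarith
    have h4 : (2:ℝ)^((n:ℝ)) = (2:ℝ)^n := by
      rw [← Real.rpow_natCast 2 n]
    have hRp : (0:ℝ) ≤ R ^ ((n:ℝ)/k - 1) := Real.rpow_nonneg (le_of_lt hR0) _
    calc (lam:ℝ) ^ ((n:ℝ)/k - 1) ≤ (2:ℝ)^((n:ℝ)/k - 1) * R ^ ((n:ℝ)/k - 1) := h2 ▸ h1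
      _ ≤ (2:ℝ)^((n:ℝ)) * R ^ ((n:ℝ)/k - 1) := mul_le_mul_of_nonneg_right h3 hRp
      _ = (2:ℝ)^n * R ^ ((n:ℝ)/k - 1) := by rw [h4]
  have hqsplit : (q:ℝ) ^ (1-(n:ℝ)) = (q:ℝ) * (q:ℝ) ^ (-(n:ℝ)) := by
    rw [show (1-(n:ℝ)) = 1 + -(n:ℝ) by ring, Real.rpow_add hq0, Real.rpow_one]
  have hRsplit : R ^ ((n:ℝ)/k - 1) = R ^ ((n:ℝ)/k) / R := by
    rw [Real.rpow_sub hR0, Real.rpow_one]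
  have hqn0 : (0:ℝ) < (q:ℝ) ^ (-(n:ℝ)) := Real.rpow_pos_of_pos hq0 _
  have hq1n0 : (0:ℝ) ≤ (q:ℝ) ^ (1-(n:ℝ)) := le_of_lt (Real.rpow_pos_of_pos hq0 _)
  have h2n : (0:ℝ) < (2:ℝ)^n := by positivity
  calc c / (5 * 2 ^ n) * (q:ℝ) ^ (1 - (n:ℝ)) * (lam:ℝ) ^ ((n:ℝ)/k - 1)
      ≤ c / (5 * 2 ^ n) * (q:ℝ) ^ (1 - (n:ℝ)) * ((2:ℝ)^n * R ^ ((n:ℝ)/k - 1)) := by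
        apply mul_le_mul_of_nonneg_left hlam2
        positivity
    _ = (c * (q:ℝ) ^ (-(n:ℝ)) * R ^ ((n:ℝ)/k)) * ((q:ℝ) / (5 * R)) := by
        rw [hqsplit, hRsplit]
        field_simp
    _ ≤ ((5 * R / q) * F) * ((q:ℝ) / (5 * R)) := by
        apply mul_le_mul_of_nonneg_right hfib
        positivity
    _ = F := by field_simp
end
end

section
/- Let Q ∈ ℤ[x_1,…,x_n] be an integral polynomial such that there is a constant C_V with |V_t(d)| ≤ C_V d^{n−1} for all integers d ≥ 1 and t ∈ ℤ. Then there is a constant C', depending only on n and C_V, such that for every integer d ≥ 1 and every t ∈ ℤ: ∑_{x ∈ ℤ^n} d · 1_{Q(x) ≡ t (mod d)} / ( d^n ( n^{1/2} + 1 + |x|/d )^{n+1} ) ≤ C', where |x| is the Euclidean norm of x. -/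
open scoped ENNReal BigOperators

noncomputable section

/-- `|V_λ(d)| = #{s ∈ (ℤ/dℤ)^n : Q(s) = λ}`. -/
def Vcard (n : ℕ) (Q : MvPolynomial (Fin n) ℤ) (d : ℕ) (lam : ℤ) : ℕ :=
  Nat.card {s : Fin n → ZMod d //
    MvPolynomial.eval s (MvPolynomial.map (Int.castRingHom (ZMod d)) Q) = (lam : ZMod d)}

/-!
Write `x = s + d y` with `s ∈ [0, d)ⁿ` the vector of residues of `x` and `y ∈ ℤⁿ`. The summand
vanishes unless `Q(s) ≡ t (mod d)`, which happens for `|V_t(d)| ≤ C_V dⁿ⁻¹` residue vectors `s`.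
For fixed `s` the triangle inequality gives `√n + 1 + |x|/d ≥ 1 + |y|`, and
`(1 + |y|)ⁿ⁺¹ ≥ ∏ᵢ (1 + |yᵢ|)^((n+1)/n)`, so the sum over `y` is at most
`d¹⁻ⁿ (∑_{k ∈ ℤ} (1 + |k|)^(-(n+1)/n))ⁿ`, a convergent series since `(n+1)/n > 1`.
Altogether the sum is at most `C_V` times that series to the `n`-th power.
-/

theorem ENNReal.tsum_fin_pi_prod {α : Type*} (w : α → ℝ≥0∞) (m : ℕ) :
    ∑' y : Fin m → α, ∏ i, w (y i) = (∑' a, w a) ^ m := by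
  induction m with
  | zero => simp
  | succ m ih =>
    rw [← (Fin.consEquiv fun _ => α).tsum_eq, ENNReal.tsum_prod', pow_succ', ← ih,
      ← ENNReal.tsum_mul_right]
    refine tsum_congr fun a => ?_
    simp [Fin.prod_univ_succ, ← ENNReal.tsum_mul_left]

theorem ENNReal.tsum_le_card_mul_of_fiberwise {S Y X : Type*} [Finite S] (e : S × Y ≃ X)
    (f : X → ℝ≥0∞) (P : S → Prop) (K : ℝ≥0∞) (hzero : ∀ s y, ¬ P s → f (e (s, y)) = 0)
    (hfiber : ∀ s, P s → ∑' y, f (e (s, y)) ≤ K) :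
    ∑' x, f x ≤ Nat.card {s // P s} * K := by
  classical
  have := Fintype.ofFinite S
  calc ∑' x, f x = ∑ s, ∑' y, f (e (s, y)) := by
        rw [← e.tsum_eq, ENNReal.tsum_prod', tsum_fintype]
    _ ≤ ∑ s, if P s then K else 0 := by
        refine Finset.sum_le_sum fun s _ => ?_
        split_ifs with hs
        · exact hfiber s hs
        · simp [hzero s _ hs]
    _ = Nat.card {s // P s} * K := by
        rw [← Finset.sum_filter, Finset.sum_const, nsmul_eq_mul, Nat.card_eq_fintype_card,
          Fintype.card_subtype]

lemma summable_one_add_abs_int_rpow_neg {q : ℝ} (hq : 1 < q) :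
    Summable fun k : ℤ => (1 + |(k : ℝ)|) ^ (-q) := by
  have hnat : Summable fun m : ℕ => (1 + (m : ℝ)) ^ (-q) := by
    refine ((summable_nat_add_iff 1).mpr (Real.summable_nat_rpow.mpr (neg_lt_neg hq))).congr
      fun m => ?_
    push_cast
    ring_nf
  exact .of_nat_of_neg (hnat.congr fun m => by simp) (hnat.congr fun m => by simp)

lemma MvPolynomial.intCast_eval {σ R : Type*} [CommRing R] (Q : MvPolynomial σ ℤ)
    (x : σ → ℤ) :
    ((eval x Q : ℤ) : R) = eval (fun i => (x i : R)) (map (Int.castRingHom R) Q) := by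
  rw [eval_map]
  exact eval₂_comp (Int.castRingHom R) x Q

def residueLiftEquiv (ι : Type*) (d : ℕ) [NeZero d] : (ι → ZMod d) × (ι → ℤ) ≃ (ι → ℤ) where
  toFun p i := (p.1 i).val + d * p.2 i
  invFun x := (fun i => (x i : ZMod d), fun i => x i / d)
  left_inv p := by
    ext i
    · simp
    · dsimp only
      rw [Int.add_mul_ediv_left _ _ (by exact_mod_cast NeZero.ne d),
        Int.ediv_eq_zero_of_lt (by positivity) (by exact_mod_cast ZMod.val_lt (p.1 i)), zero_add]
  right_inv x := by
    funext i
    simp only [ZMod.val_intCast, Int.emod_add_mul_ediv]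

section EuclideanBounds

variable {ι : Type*} [Fintype ι]

lemma EuclideanSpace.sqrt_sum_sq_eq_norm_toLp (v : ι → ℝ) :
    √(∑ i, v i ^ 2) = ‖(WithLp.toLp 2 v : EuclideanSpace ℝ ι)‖ := by
  simp [EuclideanSpace.norm_eq]

lemma EuclideanSpace.norm_sq_le_card_mul {a : EuclideanSpace ℝ ι} {c : ℝ}
    (h : ∀ i, |a i| ≤ c) :
    ‖a‖ ^ 2 ≤ Fintype.card ι * c ^ 2 := by
  rw [EuclideanSpace.norm_eq, Real.sq_sqrt (by positivity)]
  calc ∑ i, ‖a i‖ ^ 2 ≤ ∑ _i : ι, c ^ 2 :=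
        Finset.sum_le_sum fun i _ => by
          rw [Real.norm_eq_abs]; exact sq_le_sq' (by linarith [abs_nonneg (a i), h i]) (h i)
    _ = Fintype.card ι * c ^ 2 := by simp

lemma one_add_norm_le_of_abs_le {d : ℝ} (hd : 0 < d) {a : EuclideanSpace ℝ ι}
    (ha : ∀ i, |a i| ≤ d) (y : EuclideanSpace ℝ ι) :
    1 + ‖y‖ ≤ √(Fintype.card ι) + 1 + ‖a + d • y‖ / d := by
  have ha' : ‖a‖ ≤ √(Fintype.card ι) * d := by
    rw [← Real.sqrt_sq hd.le, ← Real.sqrt_mul (by positivity)]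
    exact Real.le_sqrt_of_sq_le (EuclideanSpace.norm_sq_le_card_mul ha)
  have htri : d * ‖y‖ ≤ ‖a + d • y‖ + ‖a‖ := by
    calc d * ‖y‖ = ‖(a + d • y) - a‖ := by
          rw [add_sub_cancel_left, norm_smul, Real.norm_of_nonneg hd.le]
      _ ≤ ‖a + d • y‖ + ‖a‖ := norm_sub_le _ _
  have : ‖y‖ ≤ √(Fintype.card ι) + ‖a + d • y‖ / d := by
    rw [← sub_le_iff_le_add', le_div_iff₀ hd]
    nlinarith
  linarith

lemma prod_one_add_abs_rpow_le (y : EuclideanSpace ℝ ι) {p : ℝ} (hp : 0 ≤ p) :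
    ∏ i, (1 + |y i|) ^ p ≤ (1 + ‖y‖) ^ (Fintype.card ι * p) := by
  calc ∏ i, (1 + |y i|) ^ p ≤ ∏ _i : ι, (1 + ‖y‖) ^ p :=
        Finset.prod_le_prod (fun i _ => by positivity) fun i _ =>
          Real.rpow_le_rpow (by positivity)
            (by have := PiLp.norm_apply_le y i; rw [Real.norm_eq_abs] at this; linarith) hp
    _ = (1 + ‖y‖) ^ (Fintype.card ι * p) := by
        rw [Finset.prod_const, Finset.card_univ, ← Real.rpow_natCast,
          ← Real.rpow_mul (by positivity), mul_comm]

lemma inv_rpow_le_prod_one_add_abs_rpow_neg (y : EuclideanSpace ℝ ι) {p A : ℝ} (hp : 0 ≤ p)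
    (hA : 1 + ‖y‖ ≤ A) :
    (A ^ (Fintype.card ι * p))⁻¹ ≤ ∏ i, (1 + |y i|) ^ (-p) := by
  have hneg : ∏ i, (1 + |y i|) ^ (-p) = (∏ i, (1 + |y i|) ^ p)⁻¹ := by
    rw [← Finset.prod_inv_distrib]
    exact Finset.prod_congr rfl fun i _ => Real.rpow_neg (by positivity) p
  rw [hneg]
  gcongr
  exact (prod_one_add_abs_rpow_le y hp).trans
    (Real.rpow_le_rpow (by positivity) hA (by positivity))

end EuclideanBounds

lemma intCast_residueLiftEquiv {ι : Type*} {d : ℕ} [NeZero d] (p : (ι → ZMod d) × (ι → ℤ))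
    (i : ι) : ((residueLiftEquiv ι d p i : ℤ) : ZMod d) = p.1 i :=
  congr_fun (congr_arg Prod.fst ((residueLiftEquiv ι d).symm_apply_apply p)) i

lemma dvd_eval_residueLiftEquiv_sub_iff {ι : Type*} {d : ℕ} [NeZero d] (Q : MvPolynomial ι ℤ)
    (t : ℤ) (s : ι → ZMod d) (y : ι → ℤ) :
    (d : ℤ) ∣ MvPolynomial.eval (residueLiftEquiv ι d (s, y)) Q - t ↔
      MvPolynomial.eval s (MvPolynomial.map (Int.castRingHom (ZMod d)) Q) = (t : ZMod d) := by
  rw [← ZMod.intCast_zmod_eq_zero_iff_dvd, Int.cast_sub, sub_eq_zero,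
    MvPolynomial.intCast_eval]
  simp only [intCast_residueLiftEquiv]

lemma sqrt_sum_sq_residueLiftEquiv {ι : Type*} [Fintype ι] {d : ℕ} [NeZero d]
    (s : ι → ZMod d) (y : ι → ℤ) :
    √(∑ i, (residueLiftEquiv ι d (s, y) i : ℝ) ^ 2) =
      ‖WithLp.toLp 2 (fun i => ((s i).val : ℝ)) +
        (d : ℝ) • (WithLp.toLp 2 (fun i => (y i : ℝ)) : EuclideanSpace ℝ ι)‖ := by
  rw [EuclideanSpace.sqrt_sum_sq_eq_norm_toLp]
  congr 2
  ext i
  simp [residueLiftEquiv]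

lemma tsum_residueClass_le {n d : ℕ} [NeZero d] (hn : n ≠ 0) (s : Fin n → ZMod d) :
    ∑' y : Fin n → ℤ, ENNReal.ofReal ((d : ℝ) / ((d : ℝ) ^ n *
        (√n + 1 + √(∑ i, (residueLiftEquiv (Fin n) d (s, y) i : ℝ) ^ 2) / d) ^ (n + 1)))
      ≤ ENNReal.ofReal ((d : ℝ) / d ^ n) *
        (∑' k : ℤ, ENNReal.ofReal ((1 + |(k : ℝ)|) ^ (-((n + 1 : ℝ) / n)))) ^ n := by
  have hd : (0 : ℝ) < d := by exact_mod_cast Nat.pos_of_neZero d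
  have hexp : (Fintype.card (Fin n) : ℝ) * ((n + 1 : ℝ) / n) = ((n + 1 : ℕ) : ℝ) := by
    rw [Fintype.card_fin]; push_cast; field_simp
  have hterm : ∀ y : Fin n → ℤ,
      (d : ℝ) / ((d : ℝ) ^ n *
        (√n + 1 + √(∑ i, (residueLiftEquiv (Fin n) d (s, y) i : ℝ) ^ 2) / d) ^ (n + 1))
      ≤ (d : ℝ) / d ^ n * ∏ i, (1 + |(y i : ℝ)|) ^ (-((n + 1 : ℝ) / n)) := by
    intro y
    set Y : EuclideanSpace ℝ (Fin n) := WithLp.toLp 2 fun i => (y i : ℝ)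
    have hY := one_add_norm_le_of_abs_le hd (a := WithLp.toLp 2 fun i => ((s i).val : ℝ))
      (fun i => show |((s i).val : ℝ)| ≤ d by
        rw [abs_of_nonneg (Nat.cast_nonneg _)]; exact_mod_cast (ZMod.val_lt (s i)).le) Y
    rw [Fintype.card_fin, ← sqrt_sum_sq_residueLiftEquiv] at hY
    have := inv_rpow_le_prod_one_add_abs_rpow_neg Y (p := (n + 1 : ℝ) / n)
      (by positivity) hY
    rw [hexp, Real.rpow_natCast] at this
    rw [← div_div, div_eq_mul_inv ((d : ℝ) / d ^ n)]
    gcongr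
  calc _ ≤ ∑' y : Fin n → ℤ, ENNReal.ofReal ((d : ℝ) / d ^ n) *
          ∏ i, ENNReal.ofReal ((1 + |(y i : ℝ)|) ^ (-((n + 1 : ℝ) / n))) :=
        ENNReal.tsum_le_tsum fun y => by
          rw [← ENNReal.ofReal_prod_of_nonneg fun i _ => by positivity,
            ← ENNReal.ofReal_mul (by positivity)]
          exact ENNReal.ofReal_le_ofReal (hterm y)
    _ = _ := by
        rw [ENNReal.tsum_mul_left, ENNReal.tsum_fin_pi_prod
          fun k : ℤ => ENNReal.ofReal ((1 + |(k : ℝ)|) ^ (-((n + 1 : ℝ) / n)))]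

theorem stmt17 (n : ℕ) (hn : 1 ≤ n) (CV : ℝ) :
    ∃ C' : ℝ, 0 < C' ∧
      ∀ Q : MvPolynomial (Fin n) ℤ,
        (∀ d : ℕ, 1 ≤ d → ∀ t : ℤ, (Vcard n Q d t : ℝ) ≤ CV * (d : ℝ) ^ (n - 1)) →
        ∀ d : ℕ, 1 ≤ d → ∀ t : ℤ,
          (∑' x : Fin n → ℤ, ENNReal.ofReal
              ((d : ℝ) * (if (d : ℤ) ∣ (MvPolynomial.eval x Q - t) then 1 else 0) /
                ((d : ℝ) ^ n *
                  (Real.sqrt n + 1 + Real.sqrt (∑ i, ((x i : ℝ)) ^ 2) / (d : ℝ)) ^ (n + 1))))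
            ≤ ENNReal.ofReal C' := by
  set w : ℤ → ℝ := fun k => (1 + |(k : ℝ)|) ^ (-((n + 1 : ℝ) / n))
  have hw : Summable w := summable_one_add_abs_int_rpow_neg <| by
    rw [lt_div_iff₀ (by exact_mod_cast hn)]; linarith
  have hS : ∑' k, ENNReal.ofReal (w k) = ENNReal.ofReal (∑' k, w k) :=
    (ENNReal.ofReal_tsum_of_nonneg (fun k => by positivity) hw).symm
  refine ⟨max (CV * (∑' k, w k) ^ n) 1, by positivity, fun Q hQ d hd t => ?_⟩
  have : NeZero d := ⟨by omega⟩
  have hcount :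
      (Vcard n Q d t : ℝ≥0∞) * ENNReal.ofReal ((d : ℝ) / d ^ n) ≤ ENNReal.ofReal CV := by
    rw [← ENNReal.ofReal_natCast, ← ENNReal.ofReal_mul (by positivity)]
    refine ENNReal.ofReal_le_ofReal
      ((mul_le_mul_of_nonneg_right (hQ d hd t) (by positivity)).trans_eq ?_)
    rw [mul_assoc, mul_div_assoc', pow_sub_one_mul (by omega), div_self (by positivity), mul_one]
  calc _ ≤ Vcard n Q d t *
          (ENNReal.ofReal ((d : ℝ) / d ^ n) * (∑' k, ENNReal.ofReal (w k)) ^ n) :=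
        ENNReal.tsum_le_card_mul_of_fiberwise (residueLiftEquiv (Fin n) d) _ _ _
          (fun s y hs => by
            rw [if_neg (mt (dvd_eval_residueLiftEquiv_sub_iff Q t s y).mp hs)]; simp)
          (fun s hs => by
            simp_rw [if_pos ((dvd_eval_residueLiftEquiv_sub_iff Q t s _).mpr hs), mul_one]
            exact tsum_residueClass_le (by omega) s)
    _ ≤ ENNReal.ofReal CV * ENNReal.ofReal (∑' k, w k) ^ n := by
        rw [← mul_assoc, hS]; gcongr
    _ ≤ _ := by
        rw [← ENNReal.ofReal_pow (tsum_nonneg fun k => by positivity),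
          ← ENNReal.ofReal_mul' (by positivity)]
        exact ENNReal.ofReal_le_ofReal (le_max_left _ _)
end
end
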